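/- arXiv:2603.02344 — 3 statements merged into one kernel-verified Lean document; each statement's English description precedes it below -/
import Mathlib

section
/- Let J, b, φ, λ be real numbers with J > 0, φ > 0, λ > 0. Then every complex root of the cubic polynomial p(s) = J s³ + (b + φ) s² + 2 φ λ s + φ λ² has strictly negative real part if and only if 2(b + φ) > J λ. -/
/-!
Routh–Hurwitz for a real cubic `a₃ s³ + a₂ s² + a₁ s + a₀` with `a₃ > 0`: all roots lie in the
open left half-plane iff `a₂, a₁, a₀ > 0` and `a₃ a₀ < a₂ a₁`.

Necessity: the cubic has a real root `r`, necessarily negative. Dividing by `s - r` leaves a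
quadratic `a₃ s² + e s + f` whose roots are roots of the cubic, so `e, f > 0` (read off from the
sum and product of its roots), and then `a₂ a₁ - a₃ a₀ = e (f - e r + a₃ r²) > 0`.
Sufficiency: at a root `x + i y` with `x ≥ 0`, the imaginary part forces either `y = 0`, impossible
since the cubic is positive on `[0, ∞)`, or `a₃ y² = 3 a₃ x² + 2 a₂ x + a₁`; eliminating `y` from
the real part leaves a polynomial in `x` with positive coefficients, the constant one being the
Hurwitz determinant `a₂ a₁ - a₃ a₀`.

For the closed-loop cubic this determinant is `φ λ (2 (b + φ) - J λ)`.
-/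

open Filter

theorem Real.exists_cubic_eq_zero {a : ℝ} (ha : 0 < a) (b c d : ℝ) :
    ∃ x : ℝ, a * x ^ 3 + b * x ^ 2 + c * x + d = 0 := by
  have htop : ∀ b c d : ℝ,
      Tendsto (fun x : ℝ => a * x ^ 3 + b * x ^ 2 + c * x + d) atTop atTop := fun b c d => by
    simpa [Cubic.toPoly] using (Cubic.toPoly ⟨a, b, c, d⟩).tendsto_atTop_of_leadingCoeff_nonneg
      (by rw [Cubic.degree_of_a_ne_zero' ha.ne']; norm_num)
      (by rw [Cubic.leadingCoeff_of_a_ne_zero' ha.ne']; exact ha.le)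
  have hbot :
      Tendsto (fun x : ℝ => a * x ^ 3 + b * x ^ 2 + c * x + d) atBot atBot := by
    convert tendsto_neg_atTop_atBot.comp ((htop (-b) c (-d)).comp tendsto_neg_atBot_atTop)
      using 1
    ext x
    simp only [Function.comp_apply]
    ring
  exact (by fun_prop : Continuous _).surjective (htop b c d) hbot 0

theorem quadratic_coeff_pos_of_forall_root_re_neg {a b c : ℝ} (ha : 0 < a)
    (h : ∀ z : ℂ, a * z ^ 2 + b * z + c = 0 → z.re < 0) : 0 < b ∧ 0 < c := by
  obtain ⟨s, hs⟩ := IsAlgClosed.exists_eq_mul_self (discrim (a : ℂ) b c)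
  have root_re_neg (w : ℂ) (hw : w = -b + s ∨ w = -b - s) : w.re < 0 := by
    have h2a : (2 * a : ℂ) ≠ 0 := by exact_mod_cast (mul_pos two_pos ha).ne'
    have hz := h (w / (2 * a)) <| by
      rw [sq]
      exact (quadratic_eq_zero_iff (by exact_mod_cast ha.ne') hs _).2
        (by rwa [div_left_inj' h2a, div_left_inj' h2a])
    rw [show (2 : ℂ) * a = ((2 * a : ℝ) : ℂ) by push_cast; ring, Complex.div_ofReal_re,
      div_lt_iff₀ (by positivity), zero_mul] at hz
    exact hz
  have hplus := root_re_neg _ (.inl rfl)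
  have hminus := root_re_neg _ (.inr rfl)
  have hre : s.re ^ 2 - s.im ^ 2 = b ^ 2 - 4 * a * c := by
    rw [sq, sq, ← Complex.mul_re, ← hs, discrim]; norm_cast
  simp only [Complex.add_re, Complex.sub_re, Complex.neg_re, Complex.ofReal_re] at hplus hminus
  constructor
  · linarith
  · nlinarith [sq_nonneg s.im, mul_pos (neg_pos.2 hplus) (neg_pos.2 hminus)]

section CubicHurwitz

variable {a₃ a₂ a₁ a₀ : ℝ}

theorem cubic_hurwitz_of_forall_root_re_neg (ha₃ : 0 < a₃)
    (h : ∀ s : ℂ, a₃ * s ^ 3 + a₂ * s ^ 2 + a₁ * s + a₀ = 0 → s.re < 0) :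
    0 < a₂ ∧ 0 < a₁ ∧ 0 < a₀ ∧ a₃ * a₀ < a₂ * a₁ := by
  obtain ⟨r, hr⟩ := Real.exists_cubic_eq_zero ha₃ a₂ a₁ a₀
  have hr_neg : r < 0 := by simpa using h r (by exact_mod_cast hr)
  set e := a₂ + a₃ * r
  set f := a₁ + a₂ * r + a₃ * r ^ 2
  have factor (s : ℂ) :
      a₃ * s ^ 3 + a₂ * s ^ 2 + a₁ * s + a₀ = (s - r) * (a₃ * s ^ 2 + e * s + f) := by
    have hrC : (a₃ * r ^ 3 + a₂ * r ^ 2 + a₁ * r + a₀ : ℂ) = 0 := by exact_mod_cast hr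
    push_cast [e, f]
    linear_combination hrC
  obtain ⟨he, hf⟩ := quadratic_coeff_pos_of_forall_root_re_neg ha₃
    fun z hz => h z (by rw [factor, hz, mul_zero])
  have ha₀ : a₀ = -f * r := by linear_combination hr
  have hurwitz : a₂ * a₁ - a₃ * a₀ = e * (f - e * r + a₃ * r ^ 2) := by
    rw [ha₀]; ring
  refine ⟨by nlinarith, by nlinarith, by nlinarith, ?_⟩
  have : 0 < e * (f - e * r + a₃ * r ^ 2) := mul_pos he (by nlinarith)
  linarith

theorem forall_root_re_neg_of_cubic_hurwitz (ha₃ : 0 < a₃) (ha₁ : 0 < a₁) (ha₀ : 0 < a₀)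
    (h : a₃ * a₀ < a₂ * a₁) (s : ℂ) (hs : a₃ * s ^ 3 + a₂ * s ^ 2 + a₁ * s + a₀ = 0) :
    s.re < 0 := by
  by_contra! hx
  have ha₂ : 0 < a₂ := pos_of_mul_pos_left (by nlinarith [mul_pos ha₃ ha₀]) ha₁.le
  have hre := congrArg Complex.re hs
  have him := congrArg Complex.im hs
  simp only [pow_succ, pow_zero, one_mul, Complex.add_re, Complex.add_im, Complex.mul_re,
    Complex.mul_im, Complex.ofReal_re, Complex.ofReal_im, Complex.zero_re, Complex.zero_im]
    at hre him
  set x := s.re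
  set y := s.im
  rcases mul_eq_zero.1 (show y * (a₃ * (3 * x ^ 2 - y ^ 2) + 2 * a₂ * x + a₁) = 0 by
    linear_combination him) with hy | hy
  · have : 0 < a₃ * x ^ 3 + a₂ * x ^ 2 + a₁ * x + a₀ := by positivity
    rw [hy] at hre
    linarith
  · have hurwitz : 8 * a₃ ^ 2 * x ^ 3 + 8 * a₃ * a₂ * x ^ 2 + (2 * a₃ * a₁ + 2 * a₂ ^ 2) * x
        + (a₂ * a₁ - a₃ * a₀) = 0 := by
      linear_combination (3 * a₃ * x + a₂) * hy - a₃ * hre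
    have : 0 < a₂ * a₁ - a₃ * a₀ := sub_pos.2 h
    have : 0 < 8 * a₃ ^ 2 * x ^ 3 + 8 * a₃ * a₂ * x ^ 2 + (2 * a₃ * a₁ + 2 * a₂ ^ 2) * x
        + (a₂ * a₁ - a₃ * a₀) := by positivity
    linarith

theorem cubic_forall_root_re_neg_iff (ha₃ : 0 < a₃) :
    (∀ s : ℂ, a₃ * s ^ 3 + a₂ * s ^ 2 + a₁ * s + a₀ = 0 → s.re < 0) ↔
      0 < a₂ ∧ 0 < a₁ ∧ 0 < a₀ ∧ a₃ * a₀ < a₂ * a₁ :=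
  ⟨cubic_hurwitz_of_forall_root_re_neg ha₃, fun ⟨_, ha₁, ha₀, h⟩ =>
    forall_root_re_neg_of_cubic_hurwitz ha₃ ha₁ ha₀ h⟩

end CubicHurwitz

/-- Per-agent Routh–Hurwitz condition: every complex root of the closed-loop
cubic `p(s) = J s³ + (b + φ) s² + 2 φ λ s + φ λ²` has strictly negative real
part iff `2(b + φ) > J λ`. -/
theorem stmt_0 (J b φ lam : ℝ) (hJ : 0 < J) (hφ : 0 < φ) (hlam : 0 < lam) :
    (∀ s : ℂ, (J : ℂ) * s ^ 3 + ((b : ℂ) + (φ : ℂ)) * s ^ 2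
        + 2 * (φ : ℂ) * (lam : ℂ) * s + (φ : ℂ) * (lam : ℂ) ^ 2 = 0 → s.re < 0)
      ↔ 2 * (b + φ) > J * lam := by
  have hcoeffs (s : ℂ) : (J : ℂ) * s ^ 3 + ((b : ℂ) + (φ : ℂ)) * s ^ 2
        + 2 * (φ : ℂ) * (lam : ℂ) * s + (φ : ℂ) * (lam : ℂ) ^ 2
      = (J : ℂ) * s ^ 3 + ((b + φ : ℝ) : ℂ) * s ^ 2 + ((2 * φ * lam : ℝ) : ℂ) * s
        + ((φ * lam ^ 2 : ℝ) : ℂ) := by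
    push_cast; ring
  simp_rw [hcoeffs, cubic_forall_root_re_neg_iff hJ]
  have hφlam := mul_pos hφ hlam
  constructor
  · rintro ⟨-, -, -, h⟩
    nlinarith
  · intro h
    exact ⟨by nlinarith, by positivity, by positivity, by nlinarith⟩
end

section
/- Fix m and let Φ, Λ, Ĵ, B̂ be m×m diagonal real matrices (the entries of Φ and Λ positive). Let z : ℝ → ℝ^m be twice continuously differentiable, x : ℝ → ℝ^m be differentiable, and let Ω : ℝ → ℝ^m be three times continuously differentiable with Ω(0) = 0 and Ω'(0) = 0, satisfying Φ Ω'(t) + 2ΦΛ Ω(t) + ΦΛ² ∫₀ᵗ Ω(τ)dτ = z(t) for all t ≥ 0. Define e := z − x, r := Ĵ Ω'' + B̂ Ω' + z, and u(t) := Φ (r − x)'(t) + 2ΦΛ (r − x)(t) + ΦΛ² ∫₀ᵗ (r − x)(τ)dτ. Then for all t ≥ 0, u(t) = Ĵ z''(t) + B̂ z'(t) + Φ e'(t) + 2ΦΛ e(t) + ΦΛ² ∫₀ᵗ e(τ)dτ. -/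
/-!
The channel `C f = Φ f' + 2ΦΛ f + ΦΛ² ∫₀ᵗ f` is linear, commutes with every matrix commuting
with `Φ` and `Λ` (in particular with the diagonal `Ĵ`, `B̂`), and commutes with differentiation
on signals vanishing at `0`, since then `∫₀ᵗ f' = f t`. As `C Ω = z` on `[0, ∞)` with
`Ω 0 = Ω' 0 = 0`, this gives `C Ω' = z'` and `C Ω'' = z''` there, and
`u = C (Ĵ Ω'' + B̂ Ω' + e) = Ĵ C Ω'' + B̂ C Ω' + C e = Ĵ z'' + B̂ z' + C e`.
-/

open Matrix intervalIntegral

theorem Matrix.IsDiag.commute {n : Type*} [Fintype n] [DecidableEq n] {A B : Matrix n n ℝ}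
    (hA : A.IsDiag) (hB : B.IsDiag) : Commute A B := by
  rw [← hA.diagonal_diag, ← hB.diagonal_diag]
  exact commute_diagonal _ _

theorem Set.EqOn.deriv_Ici {E : Type*} [NormedAddCommGroup E] [NormedSpace ℝ E]
    {f g : ℝ → E} {a : ℝ} (hfg : Set.EqOn f g (Set.Ici a)) (hf : Differentiable ℝ f)
    (hg : Differentiable ℝ g) : Set.EqOn (_root_.deriv f) (_root_.deriv g) (Set.Ici a) :=
  fun t ht => by
    have hu : UniqueDiffWithinAt ℝ (Set.Ici a) t := uniqueDiffOn_Ici a t ht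
    rw [← (hf t).derivWithin hu, ← (hg t).derivWithin hu, derivWithin_congr hfg (hfg ht)]

section MulVec

variable {n : Type*} [Fintype n]

theorem HasDerivAt.const_mulVec (A : Matrix n n ℝ) {f : ℝ → n → ℝ} {f' : n → ℝ} {t : ℝ}
    (hf : HasDerivAt f f' t) : HasDerivAt (fun s => A.mulVec (f s)) (A.mulVec f') t :=
  (LinearMap.toContinuousLinearMap A.mulVecLin).hasFDerivAt.comp_hasDerivAt t hf

theorem Differentiable.const_mulVec (A : Matrix n n ℝ) {f : ℝ → n → ℝ}
    (hf : Differentiable ℝ f) : Differentiable ℝ (fun s => A.mulVec (f s)) :=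
  fun t => ((hf t).hasDerivAt.const_mulVec A).differentiableAt

theorem intervalIntegral.integral_const_mulVec (A : Matrix n n ℝ) {f : ℝ → n → ℝ} {a b : ℝ}
    (hf : IntervalIntegrable f MeasureTheory.volume a b) :
    ∫ τ in a..b, A.mulVec (f τ) = A.mulVec (∫ τ in a..b, f τ) :=
  (LinearMap.toContinuousLinearMap A.mulVecLin).intervalIntegral_comp_comm hf

end MulVec

section ControlChannel

variable {n : Type*} [Fintype n] [DecidableEq n] {Φ Λ : Matrix n n ℝ}

variable (Φ Λ) in
/-- The control channel `C_u`, with the integral taken from `0`. -/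
noncomputable def controlChannel (f : ℝ → n → ℝ) (t : ℝ) : n → ℝ :=
  Φ.mulVec (deriv f t) + (2 : ℝ) • (Φ * Λ).mulVec (f t)
    + (Φ * Λ ^ 2).mulVec (∫ τ in (0 : ℝ)..t, f τ)

theorem controlChannel_add {f g : ℝ → n → ℝ} (hf : Differentiable ℝ f)
    (hg : Differentiable ℝ g) (t : ℝ) :
    controlChannel Φ Λ (f + g) t = controlChannel Φ Λ f t + controlChannel Φ Λ g t := by
  simp only [controlChannel, deriv_add (hf t) (hg t), Pi.add_apply,
    integral_add (hf.continuous.intervalIntegrable 0 t) (hg.continuous.intervalIntegrable 0 t),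
    mulVec_add, smul_add]
  abel

theorem controlChannel_const_mulVec {A : Matrix n n ℝ} (hΦ : Commute A Φ) (hΛ : Commute A Λ)
    {f : ℝ → n → ℝ} (hf : Differentiable ℝ f) (t : ℝ) :
    controlChannel Φ Λ (fun s => A.mulVec (f s)) t = A.mulVec (controlChannel Φ Λ f t) := by
  have hcomm {B : Matrix n n ℝ} (hB : Commute A B) (v : n → ℝ) :
      B.mulVec (A.mulVec v) = A.mulVec (B.mulVec v) := by
    rw [mulVec_mulVec, mulVec_mulVec, hB.eq]
  simp only [controlChannel, ((hf t).hasDerivAt.const_mulVec A).deriv,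
    integral_const_mulVec A (hf.continuous.intervalIntegrable 0 t), mulVec_add, mulVec_smul,
    hcomm hΦ, hcomm (hΦ.mul_right hΛ), hcomm (hΦ.mul_right (hΛ.pow_right 2))]

theorem hasDerivAt_controlChannel {f : ℝ → n → ℝ} (hf : ContDiff ℝ 2 f) (t : ℝ) :
    HasDerivAt (controlChannel Φ Λ f)
      (Φ.mulVec (deriv (deriv f) t) + (2 : ℝ) • (Φ * Λ).mulVec (deriv f t)
        + (Φ * Λ ^ 2).mulVec (f t)) t := by
  have hf' : Differentiable ℝ (deriv f) := (hf.deriv' (n := 1)).differentiable one_ne_zero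
  have hcont : Continuous f := hf.continuous
  have hint : HasDerivAt (fun s => ∫ τ in (0 : ℝ)..s, f τ) (f t) t :=
    integral_hasDerivAt_right (hcont.intervalIntegrable _ _)
      hcont.aestronglyMeasurable.stronglyMeasurableAtFilter hcont.continuousAt
  exact (((hf' t).hasDerivAt.const_mulVec Φ).add
    (((hf.differentiable two_ne_zero t).hasDerivAt.const_mulVec (Φ * Λ)).const_smul
      (2 : ℝ))).add (hint.const_mulVec (Φ * Λ ^ 2))

theorem controlChannel_deriv {f : ℝ → n → ℝ} (hf : ContDiff ℝ 2 f) (hf0 : f 0 = 0) (t : ℝ) :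
    controlChannel Φ Λ (deriv f) t = deriv (controlChannel Φ Λ f) t := by
  have hftc : ∫ τ in (0 : ℝ)..t, deriv f τ = f t := by
    rw [integral_deriv_eq_sub (fun τ _ => hf.differentiable two_ne_zero τ)
      ((hf.continuous_deriv one_le_two).intervalIntegrable _ _), hf0, sub_zero]
  rw [(hasDerivAt_controlChannel hf t).deriv, controlChannel, hftc]

theorem eqOn_deriv_of_eqOn_controlChannel {f g : ℝ → n → ℝ} (hf : ContDiff ℝ 2 f)
    (hf0 : f 0 = 0) (hg : Differentiable ℝ g)
    (hgf : Set.EqOn g (controlChannel Φ Λ f) (Set.Ici 0)) :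
    Set.EqOn (deriv g) (controlChannel Φ Λ (deriv f)) (Set.Ici 0) := fun t ht => by
  rw [controlChannel_deriv hf hf0]
  exact hgf.deriv_Ici hg (fun s => (hasDerivAt_controlChannel hf s).differentiableAt) ht

end ControlChannel

theorem stmt_3_general (m : ℕ) (Φ Λ Jh Bh : Matrix (Fin m) (Fin m) ℝ)
    (hΦd : Φ.IsDiag) (hΛd : Λ.IsDiag) (hJhd : Jh.IsDiag) (hBhd : Bh.IsDiag)
    (z x Ω : ℝ → Fin m → ℝ)
    (hz : ContDiff ℝ 2 z) (hx : Differentiable ℝ x) (hΩ : ContDiff ℝ 3 Ω)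
    (hΩ0 : Ω 0 = 0) (hΩ'0 : deriv Ω 0 = 0)
    (hode : ∀ t ≥ (0 : ℝ),
      Φ.mulVec (deriv Ω t) + (2 : ℝ) • (Φ * Λ).mulVec (Ω t)
        + (Φ * Λ ^ 2).mulVec (∫ τ in (0 : ℝ)..t, Ω τ) = z t)
    (e r u : ℝ → Fin m → ℝ)
    (he : e = z - x)
    (hr : r = fun t => Jh.mulVec (deriv (deriv Ω) t) + Bh.mulVec (deriv Ω t) + z t)
    (hu : u = fun t => Φ.mulVec (deriv (r - x) t) + (2 : ℝ) • (Φ * Λ).mulVec ((r - x) t)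
        + (Φ * Λ ^ 2).mulVec (∫ τ in (0 : ℝ)..t, (r - x) τ)) :
    ∀ t ≥ (0 : ℝ),
      u t = Jh.mulVec (deriv (deriv z) t) + Bh.mulVec (deriv z t)
        + Φ.mulVec (deriv e t) + (2 : ℝ) • (Φ * Λ).mulVec (e t)
        + (Φ * Λ ^ 2).mulVec (∫ τ in (0 : ℝ)..t, e τ) := by
  intro t ht
  have hΩ1 : ContDiff ℝ 2 (deriv Ω) := hΩ.deriv' (n := 2)
  have hΩ1' : Differentiable ℝ (deriv Ω) := hΩ1.differentiable two_ne_zero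
  have hΩ2 : Differentiable ℝ (deriv (deriv Ω)) :=
    (hΩ1.deriv' (n := 1)).differentiable one_ne_zero
  have hz1 : Set.EqOn (deriv z) (controlChannel Φ Λ (deriv Ω)) (Set.Ici 0) :=
    eqOn_deriv_of_eqOn_controlChannel (hΩ.of_le (by norm_num)) hΩ0
      (hz.differentiable two_ne_zero) fun s hs => (hode s hs).symm
  have hz2 : Set.EqOn (deriv (deriv z)) (controlChannel Φ Λ (deriv (deriv Ω))) (Set.Ici 0) :=
    eqOn_deriv_of_eqOn_controlChannel hΩ1 hΩ'0
      ((hz.deriv' (n := 1)).differentiable one_ne_zero) hz1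
  have hediff : Differentiable ℝ e := he ▸ (hz.differentiable two_ne_zero).sub hx
  have hrx : r - x = (fun s => Jh.mulVec (deriv (deriv Ω) s))
      + (fun s => Bh.mulVec (deriv Ω s)) + e := by
    subst hr he
    funext s
    simp only [Pi.add_apply, Pi.sub_apply]
    abel
  have hJ := hΩ2.const_mulVec Jh
  have hB := hΩ1'.const_mulVec Bh
  subst hu
  change controlChannel Φ Λ (r - x) t = _
  rw [hrx, controlChannel_add (hJ.add hB) hediff, controlChannel_add hJ hB,
    controlChannel_const_mulVec (hJhd.commute hΦd) (hJhd.commute hΛd) hΩ2,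
    controlChannel_const_mulVec (hBhd.commute hΦd) (hBhd.commute hΛd) hΩ1', ← hz1 ht, ← hz2 ht,
    controlChannel]
  abel

/-- Lemma 1 (time domain): with the control channel
`C_u f = Φ f' + 2ΦΛ f + ΦΛ² ∫₀ᵗ f`, the internal signal `Ω = C_u⁻¹ z`
(zero initial conditions), the ideal reference `r = Ĵ Ω̈ + B̂ Ω̇ + z`, and the
control input `u = C_u (r − x)`, one has `u = Ĵ z̈ + B̂ ż + C_u e` with
`e = z − x`. -/
theorem stmt_3 (m : ℕ) (Φ Λ Jh Bh : Matrix (Fin m) (Fin m) ℝ)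
    (hΦd : Φ.IsDiag) (hΛd : Λ.IsDiag) (hJhd : Jh.IsDiag) (hBhd : Bh.IsDiag)
    (hΦpos : ∀ i, 0 < Φ i i) (hΛpos : ∀ i, 0 < Λ i i)
    (z x Ω : ℝ → Fin m → ℝ)
    (hz : ContDiff ℝ 2 z) (hx : Differentiable ℝ x) (hΩ : ContDiff ℝ 3 Ω)
    (hΩ0 : Ω 0 = 0) (hΩ'0 : deriv Ω 0 = 0)
    (hode : ∀ t ≥ (0 : ℝ),
      Φ.mulVec (deriv Ω t) + (2 : ℝ) • (Φ * Λ).mulVec (Ω t)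
        + (Φ * Λ ^ 2).mulVec (∫ τ in (0 : ℝ)..t, Ω τ) = z t)
    (e r u : ℝ → Fin m → ℝ)
    (he : e = z - x)
    (hr : r = fun t => Jh.mulVec (deriv (deriv Ω) t) + Bh.mulVec (deriv Ω t) + z t)
    (hu : u = fun t => Φ.mulVec (deriv (r - x) t) + (2 : ℝ) • (Φ * Λ).mulVec ((r - x) t)
        + (Φ * Λ ^ 2).mulVec (∫ τ in (0 : ℝ)..t, (r - x) τ)) :
    ∀ t ≥ (0 : ℝ),
      u t = Jh.mulVec (deriv (deriv z) t) + Bh.mulVec (deriv z t)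
        + Φ.mulVec (deriv e t) + (2 : ℝ) • (Φ * Λ).mulVec (e t)
        + (Φ * Λ ^ 2).mulVec (∫ τ in (0 : ℝ)..t, e τ) :=
  stmt_3_general m Φ Λ Jh Bh hΦd hΛd hJhd hBhd z x Ω hz hx hΩ hΩ0 hΩ'0 hode e r u he hr hu
end

section
/- Under the hypotheses of the preceding Lyapunov computation (diagonal positive J, Φ, Γ; symmetric positive definite P, Q with (−J⁻¹Φ)ᵀP + P(−J⁻¹Φ) = −Q; continuous η; differentiable θ, Ξ̃ solving θ' = −J⁻¹Φθ − J⁻¹Ξ̃η and Ξ̃' = Γ(Pθ)ηᵀ; V(t) = θᵀPθ + tr(Ξ̃ᵀJ⁻¹Γ⁻¹Ξ̃)), for all t ≥ 0 and T ≥ 0: V(t) ≤ V(0), ‖θ(t)‖² ≤ V(0) / λ_min(P), and ∫₀ᵀ ‖θ(t)‖² dt ≤ V(0) / λ_min(Q), where λ_min denotes the smallest eigenvalue of a symmetric positive definite matrix. -/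
/-!
Along solutions of the closed loop, the Lyapunov equation turns the derivative of the quadratic
part `θᵀPθ` into `-θᵀQθ` plus a cross term `-2 (Pθ)ᵀJ⁻¹Ξ̃η`, and the adaptation law
`Ξ̃' = Γ(Pθ)ηᵀ` makes the derivative of the trace part exactly `+2 (Pθ)ᵀJ⁻¹Ξ̃η`, so
`V' = -θᵀQθ ≤ 0`. Hence `V` is antitone; since the trace part is nonnegative,
`λ_min(P) ‖θ‖² ≤ θᵀPθ ≤ V ≤ V(0)`, and integrating `V' = -θᵀQθ` gives
`λ_min(Q) ∫₀ᵀ ‖θ‖² ≤ V(0) - V(T) ≤ V(0)`.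
-/

open Matrix

/-- Smallest eigenvalue of a Hermitian real matrix. -/
noncomputable def lambdaMin {m : ℕ} {A : Matrix (Fin m) (Fin m) ℝ}
    (hA : A.IsHermitian) : ℝ := ⨅ i, hA.eigenvalues i

section Derivatives

variable {𝕜 m n : Type*} [NontriviallyNormedField 𝕜] [Fintype m] {t : 𝕜}

theorem HasDerivAt.dotProduct {x y : 𝕜 → m → 𝕜} {x' y' : m → 𝕜}
    (hx : HasDerivAt x x' t) (hy : HasDerivAt y y' t) :
    HasDerivAt (fun s => x s ⬝ᵥ y s) (x' ⬝ᵥ y t + x t ⬝ᵥ y') t := by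
  simp only [_root_.dotProduct, ← Finset.sum_add_distrib]
  exact HasDerivAt.fun_sum fun i _ => (hasDerivAt_pi.1 hx i).mul (hasDerivAt_pi.1 hy i)

theorem HasDerivAt.matrix_mulVec (A : Matrix n m 𝕜) {x : 𝕜 → m → 𝕜} {x' : m → 𝕜}
    (hx : HasDerivAt x x' t) : HasDerivAt (fun s => A *ᵥ x s) (A *ᵥ x') t :=
  hasDerivAt_pi.2 fun i => by simpa [mulVec] using (hasDerivAt_const t (A i)).dotProduct hx

end Derivatives

namespace Matrix

section Algebra

variable {m n R : Type*} [Fintype m] [Fintype n] [CommSemiring R]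

theorem trace_transpose_mul_mul (A : Matrix m m R) (B C : Matrix m n R) :
    (Bᵀ * A * C).trace = ∑ j, Bᵀ j ⬝ᵥ A *ᵥ Cᵀ j := by
  simp only [trace, diag, mul_apply, dotProduct, mulVec, transpose_apply, Finset.sum_mul,
    Finset.mul_sum]
  exact Finset.sum_congr rfl fun _ _ => Finset.sum_comm.trans (by simp only [mul_assoc])

theorem trace_transpose_vecMulVec_mul_mul (u : m → R) (v : n → R) (A : Matrix m m R)
    (X : Matrix m n R) : ((vecMulVec u v)ᵀ * A * X).trace = u ⬝ᵥ A *ᵥ X *ᵥ v := by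
  rw [transpose_vecMulVec, vecMulVec_mul, vecMulVec_mul, trace_vecMulVec, dotProduct_comm,
    ← dotProduct_mulVec, ← dotProduct_mulVec]

theorem dotProduct_transpose_mul_add_mul_mulVec {A P : Matrix m m R} (hP : P.IsSymm)
    (x : m → R) : x ⬝ᵥ (Aᵀ * P + P * A) *ᵥ x = 2 * (A *ᵥ x ⬝ᵥ P *ᵥ x) := by
  rw [add_mulVec, dotProduct_add, ← mulVec_mulVec, ← mulVec_mulVec, dotProduct_mulVec x Aᵀ,
    vecMul_transpose, dotProduct_mulVec x P, ← mulVec_transpose, hP.eq,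
    dotProduct_comm (P *ᵥ x)]
  ring

end Algebra

section Lyapunov

variable {m n : Type*} [Fintype m] [Fintype n] {t : ℝ}

theorem hasDerivAt_dotProduct_mulVec_self {A : Matrix m m ℝ} (hA : A.IsSymm)
    {x : ℝ → m → ℝ} {x' : m → ℝ} (hx : HasDerivAt x x' t) :
    HasDerivAt (fun s => x s ⬝ᵥ A *ᵥ x s) (2 * (x' ⬝ᵥ A *ᵥ x t)) t := by
  refine (hx.dotProduct (hx.matrix_mulVec A)).congr_deriv ?_
  rw [dotProduct_mulVec (x t), dotProduct_comm, ← mulVec_transpose, hA.eq]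
  ring

theorem hasDerivAt_trace_transpose_mul_mul_self {A : Matrix m m ℝ} (hA : A.IsSymm)
    {X : ℝ → Matrix m n ℝ} {X' : Matrix m n ℝ}
    (hX : ∀ i j, HasDerivAt (fun s => X s i j) (X' i j) t) :
    HasDerivAt (fun s => ((X s)ᵀ * A * X s).trace) (2 * (X'ᵀ * A * X t).trace) t := by
  simp_rw [trace_transpose_mul_mul, Finset.mul_sum]
  exact HasDerivAt.fun_sum fun j _ =>
    hasDerivAt_dotProduct_mulVec_self hA (hasDerivAt_pi.2 fun i => hX i j)

theorem hasDerivAt_lyapunov {A B Γ M P Q : Matrix m m ℝ} (hM : M.IsSymm) (hΓM : Γᵀ * M = B)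
    (hP : P.IsSymm) (hLyap : (-A)ᵀ * P + P * (-A) = -Q)
    {η : ℝ → n → ℝ} {θ : ℝ → m → ℝ} {Ξ : ℝ → Matrix m n ℝ}
    (hθ : HasDerivAt θ (-(A *ᵥ θ t) - B *ᵥ (Ξ t *ᵥ η t)) t)
    (hΞ : ∀ i j, HasDerivAt (fun s => Ξ s i j)
      (vecMulVec (Γ *ᵥ (P *ᵥ θ t)) (η t) i j) t) :
    HasDerivAt (fun s => θ s ⬝ᵥ P *ᵥ θ s + ((Ξ s)ᵀ * M * Ξ s).trace)
      (-(θ t ⬝ᵥ Q *ᵥ θ t)) t := by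
  refine ((hasDerivAt_dotProduct_mulVec_self hP hθ).add
    (hasDerivAt_trace_transpose_mul_mul_self hM hΞ)).congr_deriv ?_
  have hdissipation : 2 * ((-A) *ᵥ θ t ⬝ᵥ P *ᵥ θ t) = -(θ t ⬝ᵥ Q *ᵥ θ t) := by
    rw [← dotProduct_transpose_mul_add_mul_mulVec hP, hLyap, neg_mulVec, dotProduct_neg]
  have hcross :
      Γ *ᵥ (P *ᵥ θ t) ⬝ᵥ M *ᵥ (Ξ t *ᵥ η t) = B *ᵥ (Ξ t *ᵥ η t) ⬝ᵥ P *ᵥ θ t := by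
    rw [dotProduct_mulVec, ← vecMul_transpose, vecMul_vecMul, hΓM, ← dotProduct_mulVec,
      dotProduct_comm]
  rw [trace_transpose_vecMulVec_mul_mul, hcross, sub_dotProduct, ← neg_mulVec, ← hdissipation]
  ring

end Lyapunov

section Square

variable {n : Type*} [Fintype n] [DecidableEq n]

section Diagonal

variable {J Γ : Matrix n n ℝ}

theorem IsDiag.inv_eq_diagonal (hJ : J.IsDiag) (hJ0 : ∀ i, J i i ≠ 0) :
    J⁻¹ = diagonal fun i => (J i i)⁻¹ := by
  refine inv_eq_left_inv ?_
  nth_rewrite 2 [← hJ.diagonal_diag]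
  simp [diagonal_mul_diagonal, hJ0]

theorem IsDiag.posSemidef_inv_mul_inv (hJ : J.IsDiag) (hΓ : Γ.IsDiag) (hJ0 : ∀ i, 0 < J i i)
    (hΓ0 : ∀ i, 0 < Γ i i) : (J⁻¹ * Γ⁻¹).PosSemidef := by
  rw [hJ.inv_eq_diagonal fun i => (hJ0 i).ne', hΓ.inv_eq_diagonal fun i => (hΓ0 i).ne',
    diagonal_mul_diagonal]
  exact PosSemidef.diagonal fun i => by have := hJ0 i; have := hΓ0 i; positivity

theorem IsDiag.transpose_mul_inv_mul_inv (hJ : J.IsDiag) (hΓ : Γ.IsDiag)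
    (hJ0 : ∀ i, J i i ≠ 0) (hΓ0 : ∀ i, Γ i i ≠ 0) : Γᵀ * (J⁻¹ * Γ⁻¹) = J⁻¹ := by
  rw [hJ.inv_eq_diagonal hJ0, hΓ.inv_eq_diagonal hΓ0]
  nth_rewrite 1 [← hΓ.diagonal_diag]
  rw [diagonal_transpose, diagonal_mul_diagonal, diagonal_mul_diagonal]
  congr 1
  ext i
  rw [diag_apply, mul_left_comm, mul_inv_cancel₀ (hΓ0 i), mul_one]

end Diagonal

theorem IsHermitian.posSemidef_sub_smul_one {A : Matrix n n ℝ} (hA : A.IsHermitian) {c : ℝ}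
    (hc : ∀ i, c ≤ hA.eigenvalues i) : (A - c • 1).PosSemidef := by
  have hconj : A - c • 1 = Unitary.conjStarAlgAut ℝ _ hA.eigenvectorUnitary
      (diagonal fun i => hA.eigenvalues i - c) := by
    have hdiag : (diagonal fun i => hA.eigenvalues i - c)
        = diagonal (RCLike.ofReal ∘ hA.eigenvalues) - algebraMap ℝ _ c := by
      ext i j
      by_cases h : i = j <;> simp [h, algebraMap_eq_diagonal]
    rw [hdiag, map_sub, AlgHomClass.commutes, ← hA.spectral_theorem,
      Algebra.algebraMap_eq_smul_one]
  rw [hconj, Unitary.conjStarAlgAut_apply, Unitary.isUnit_coe.posSemidef_star_right_conjugate_iff]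
  exact PosSemidef.diagonal fun i => sub_nonneg.2 (hc i)

end Square

end Matrix

section LambdaMin

variable {m : ℕ} {A : Matrix (Fin m) (Fin m) ℝ}

theorem lambdaMin_nonneg (hA : A.PosSemidef) : 0 ≤ lambdaMin hA.1 :=
  Real.iInf_nonneg hA.eigenvalues_nonneg

theorem lambdaMin_pos [Nonempty (Fin m)] (hA : A.PosDef) : 0 < lambdaMin hA.1 := by
  obtain ⟨i, hi⟩ := exists_eq_ciInf_of_finite (f := hA.1.eigenvalues)
  rw [lambdaMin, ← hi]
  exact hA.eigenvalues_pos i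

/-- For `m = 0` both sides vanish, since `lambdaMin` is then an empty infimum, `0`. -/
theorem sum_sq_le_div_lambdaMin (hA : A.PosDef) (x : Fin m → ℝ) :
    ∑ i, x i ^ 2 ≤ x ⬝ᵥ A *ᵥ x / lambdaMin hA.1 := by
  rcases isEmpty_or_nonempty (Fin m) with hm | hm
  · simp
  rw [le_div_iff₀ (lambdaMin_pos hA)]
  have hshift := hA.1.posSemidef_sub_smul_one fun i => ciInf_le (Finite.bddBelow_range _) i
  have hquad := hshift.dotProduct_mulVec_nonneg x
  rw [star_trivial, sub_mulVec, smul_mulVec, one_mulVec, dotProduct_sub, dotProduct_smul,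
    sub_nonneg] at hquad
  convert hquad using 1
  simp [lambdaMin, dotProduct, sq, Finset.sum_mul, mul_comm]

end LambdaMin

theorem intervalIntegral_le_of_hasDerivAt_neg {V g : ℝ → ℝ}
    (hV : ∀ t, HasDerivAt V (-g t) t) (hg : Continuous g) (hV0 : ∀ t, 0 ≤ V t) (a b : ℝ) :
    ∫ t in a..b, g t ≤ V a := by
  have hftc := intervalIntegral.integral_eq_sub_of_hasDerivAt (fun t _ => hV t)
    (hg.neg.intervalIntegrable a b)
  rw [intervalIntegral.integral_neg] at hftc
  linarith [hV0 b]

theorem stmt_6_general (m : ℕ) (J Φ Γ : Matrix (Fin m) (Fin m) ℝ)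
    (hJd : J.IsDiag) (hΓd : Γ.IsDiag)
    (hJpos : ∀ i, 0 < J i i) (hΓpos : ∀ i, 0 < Γ i i)
    (P Q : Matrix (Fin m) (Fin m) ℝ) (hP : P.PosDef) (hQ : Q.PosDef)
    (hLyap : (-(J⁻¹ * Φ))ᵀ * P + P * (-(J⁻¹ * Φ)) = -Q)
    (η : ℝ → Fin (2 * m) → ℝ)
    (θ : ℝ → Fin m → ℝ) (Ξ : ℝ → Matrix (Fin m) (Fin (2 * m)) ℝ)
    (hθ : ∀ t, HasDerivAt θ
      (-((J⁻¹ * Φ).mulVec (θ t)) - J⁻¹.mulVec ((Ξ t).mulVec (η t))) t)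
    (hΞ : ∀ t i j, HasDerivAt (fun s => Ξ s i j)
      ((Matrix.vecMulVec (Γ.mulVec (P.mulVec (θ t))) (η t)) i j) t)
    (V : ℝ → ℝ)
    (hV : V = fun t => θ t ⬝ᵥ P.mulVec (θ t)
        + ((Ξ t)ᵀ * (J⁻¹ * Γ⁻¹) * Ξ t).trace) :
    (∀ t ≥ (0 : ℝ), V t ≤ V 0 ∧ (∑ i, θ t i ^ 2) ≤ V 0 / lambdaMin hP.1)
      ∧ ∀ T ≥ (0 : ℝ), (∫ t in (0 : ℝ)..T, ∑ i, θ t i ^ 2) ≤ V 0 / lambdaMin hQ.1 := by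
  have hM := hJd.posSemidef_inv_mul_inv hΓd hJpos hΓpos
  have hΓM := hJd.transpose_mul_inv_mul_inv hΓd (fun i => (hJpos i).ne') fun i => (hΓpos i).ne'
  have hV' : ∀ t, HasDerivAt V (-(θ t ⬝ᵥ Q *ᵥ θ t)) t := fun t => by
    rw [hV]
    exact hasDerivAt_lyapunov (isHermitian_iff_isSymm.1 hM.1) hΓM
      (isHermitian_iff_isSymm.1 hP.1) hLyap (hθ t) (hΞ t)
  have hVanti : Antitone V := antitone_of_hasDerivAt_nonpos hV' fun t =>
    neg_nonpos.2 (by simpa using hQ.posSemidef.dotProduct_mulVec_nonneg (θ t))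
  have hPV : ∀ t, θ t ⬝ᵥ P *ᵥ θ t ≤ V t := fun t => by
    rw [hV]
    exact le_add_of_nonneg_right
      (by simpa using (hM.conjTranspose_mul_mul_same (Ξ t)).trace_nonneg)
  have hVnonneg : ∀ t, 0 ≤ V t := fun t =>
    le_trans (by simpa using hP.posSemidef.dotProduct_mulVec_nonneg (θ t)) (hPV t)
  have hθc : Continuous θ := continuous_iff_continuousAt.2 fun t => (hθ t).continuousAt
  have hQθc : Continuous fun t => θ t ⬝ᵥ Q *ᵥ θ t :=
    hθc.dotProduct (continuous_const.matrix_mulVec hθc)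
  refine ⟨fun t ht => ⟨hVanti ht, ?_⟩, fun T hT => ?_⟩
  · exact (sum_sq_le_div_lambdaMin hP (θ t)).trans
      (div_le_div_of_nonneg_right ((hPV t).trans (hVanti ht)) (lambdaMin_nonneg hP.posSemidef))
  calc ∫ t in (0 : ℝ)..T, ∑ i, θ t i ^ 2
      ≤ ∫ t in (0 : ℝ)..T, θ t ⬝ᵥ Q *ᵥ θ t / lambdaMin hQ.1 :=
        intervalIntegral.integral_mono_on hT
          ((by fun_prop : Continuous fun t => ∑ i, θ t i ^ 2).intervalIntegrable _ _)
          ((hQθc.div_const _).intervalIntegrable _ _)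
          fun t _ => sum_sq_le_div_lambdaMin hQ (θ t)
    _ = (∫ t in (0 : ℝ)..T, θ t ⬝ᵥ Q *ᵥ θ t) / lambdaMin hQ.1 :=
        intervalIntegral.integral_div _ _
    _ ≤ V 0 / lambdaMin hQ.1 :=
        div_le_div_of_nonneg_right (intervalIntegral_le_of_hasDerivAt_neg hV' hQθc hVnonneg 0 T)
          (lambdaMin_nonneg hQ.posSemidef)

/-- Boundedness and L² conclusions in the proof of Theorem 1: since
`V̇ = −θᵀQθ ≤ 0`, `V` is nonincreasing, `‖θ(t)‖² ≤ V(0)/λ_min(P)` and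
`∫₀ᵀ ‖θ‖² ≤ V(0)/λ_min(Q)`. -/
theorem stmt_6 (m : ℕ) (J Φ Γ : Matrix (Fin m) (Fin m) ℝ)
    (hJd : J.IsDiag) (hΦd : Φ.IsDiag) (hΓd : Γ.IsDiag)
    (hJpos : ∀ i, 0 < J i i) (hΦpos : ∀ i, 0 < Φ i i) (hΓpos : ∀ i, 0 < Γ i i)
    (P Q : Matrix (Fin m) (Fin m) ℝ) (hP : P.PosDef) (hQ : Q.PosDef)
    (hLyap : (-(J⁻¹ * Φ))ᵀ * P + P * (-(J⁻¹ * Φ)) = -Q)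
    (η : ℝ → Fin (2 * m) → ℝ) (hη : Continuous η)
    (θ : ℝ → Fin m → ℝ) (Ξ : ℝ → Matrix (Fin m) (Fin (2 * m)) ℝ)
    (hθ : ∀ t, HasDerivAt θ
      (-((J⁻¹ * Φ).mulVec (θ t)) - J⁻¹.mulVec ((Ξ t).mulVec (η t))) t)
    (hΞ : ∀ t i j, HasDerivAt (fun s => Ξ s i j)
      ((Matrix.vecMulVec (Γ.mulVec (P.mulVec (θ t))) (η t)) i j) t)
    (V : ℝ → ℝ)
    (hV : V = fun t => θ t ⬝ᵥ P.mulVec (θ t)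
        + ((Ξ t)ᵀ * (J⁻¹ * Γ⁻¹) * Ξ t).trace) :
    (∀ t ≥ (0 : ℝ), V t ≤ V 0 ∧ (∑ i, θ t i ^ 2) ≤ V 0 / lambdaMin hP.1)
      ∧ ∀ T ≥ (0 : ℝ), (∫ t in (0 : ℝ)..T, ∑ i, θ t i ^ 2) ≤ V 0 / lambdaMin hQ.1 :=
  stmt_6_general m J Φ Γ hJd hΓd hJpos hΓpos P Q hP hQ hLyap η θ Ξ hθ hΞ V hV
end
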